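/- If f is a holomorphic function on a connected open subset U of ℂ with f' nowhere vanishing on U, and the Schwarzian derivative S(f) vanishes identically on U, then f agrees on U with a Möbius transformation, i.e. there exist a,b,c,d ∈ ℂ with ad - bc ≠ 0 such that f(z) = (az+b)/(cz+d) for all z in U. -/

import Mathlib

/-!
The pre-Schwarzian `q = f''/f'` satisfies `q' = S(f) + q²/2`, so `S(f) = 0` is the Riccati
equation `q' = q²/2`. Normalising `c = -q(z₀)/2` and `d = 1 - c z₀`, the function
`w = q (cz + d) + 2c` solves the linear equation `w' = (q/2) w` and vanishes at `z₀`;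
comparing orders of vanishing of `w` and `w'` shows that `w` vanishes near `z₀`, hence on `U`
by the identity theorem. Thus `f''(cz + d) = -2c f'`, i.e. `(f'(cz + d)²)' = 0`, so
`f' = k/(cz + d)²` with `k = f'(z₀) ≠ 0`. This is the derivative of a Möbius map of determinant
`k`, which can be chosen to agree with `f` at `z₀`, hence on `U`.
-/

/-- The Schwarzian derivative `S(f) = f'''/f' - (3/2)(f''/f')²`. -/
noncomputable def schwarzian (f : ℂ → ℂ) (z : ℂ) : ℂ :=
  iteratedDeriv 3 f z / deriv f z - (3 / 2) * (iteratedDeriv 2 f z / deriv f z) ^ 2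

open Filter Topology Set

noncomputable def preSchwarzian (f : ℂ → ℂ) (z : ℂ) : ℂ :=
  iteratedDeriv 2 f z / deriv f z

theorem hasDerivAt_preSchwarzian {f : ℂ → ℂ} {z : ℂ}
    (hf₁ : DifferentiableAt ℂ (deriv f) z) (hf₂ : DifferentiableAt ℂ (iteratedDeriv 2 f) z)
    (hf' : deriv f z ≠ 0) :
    HasDerivAt (preSchwarzian f) (schwarzian f z + preSchwarzian f z ^ 2 / 2) z := by
  have h2 : deriv (deriv f) = iteratedDeriv 2 f := by
    rw [iteratedDeriv_succ, iteratedDeriv_one]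
  refine (hf₂.hasDerivAt.fun_div hf₁.hasDerivAt hf').congr_deriv ?_
  rw [schwarzian, preSchwarzian, h2, iteratedDeriv_succ (n := 2)]
  field_simp
  ring

section LinearODE

variable {𝕜 E : Type*} [NontriviallyNormedField 𝕜] [CharZero 𝕜]
  [NormedAddCommGroup E] [NormedSpace 𝕜 E] [CompleteSpace E]

/-- Differentiation lowers the order of a zero by one while multiplication by `a` does not
lower it, so `w' = a • w` forces the order to be infinite. -/
theorem AnalyticAt.eventually_eq_zero_of_deriv_eventuallyEq_smul {w : 𝕜 → E} {a : 𝕜 → 𝕜}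
    {z₀ : 𝕜} (hw : AnalyticAt 𝕜 w z₀) (ha : AnalyticAt 𝕜 a z₀) (hw₀ : w z₀ = 0)
    (hderiv : deriv w =ᶠ[𝓝 z₀] a • w) : ∀ᶠ z in 𝓝 z₀, w z = 0 := by
  rw [← analyticOrderAt_eq_top]
  have horder :
      analyticOrderAt a z₀ + analyticOrderAt w z₀ + 1 = analyticOrderAt w z₀ := by
    simpa [hw₀, analyticOrderAt_congr hderiv, analyticOrderAt_smul ha hw]
      using hw.analyticOrderAt_deriv_add_one
  by_contra hne
  have hle : analyticOrderAt w z₀ + 1 ≤ analyticOrderAt w z₀ :=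
    calc _ ≤ analyticOrderAt a z₀ + analyticOrderAt w z₀ + 1 := by gcongr; exact le_add_self
      _ = _ := horder
  exact lt_irrefl _ ((ENat.add_one_le_iff hne).1 hle)

end LinearODE

theorem hasDerivAt_moebius {𝕜 : Type*} [NontriviallyNormedField 𝕜] {a b c d z : 𝕜}
    (hz : c * z + d ≠ 0) :
    HasDerivAt (fun z => (a * z + b) / (c * z + d)) ((a * d - b * c) / (c * z + d) ^ 2) z := by
  refine ((((hasDerivAt_id' z).const_mul a).add_const b).fun_div
    (((hasDerivAt_id' z).const_mul c).add_const d) hz).congr_deriv ?_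
  ring

section OpenPreconnected

variable {U : Set ℂ}

theorem IsOpen.eqOn_zero_of_deriv_eq_smul {E : Type*} [NormedAddCommGroup E]
    [NormedSpace ℂ E] [CompleteSpace E] (hU : IsOpen U) (hUc : IsPreconnected U)
    {w : ℂ → E} {a : ℂ → ℂ} (hw : DifferentiableOn ℂ w U)
    (ha : AnalyticOnNhd ℂ a U) (hderiv : EqOn (deriv w) (a • w) U) {z₀ : ℂ} (hz₀ : z₀ ∈ U)
    (hw₀ : w z₀ = 0) : EqOn w 0 U := by
  have hwA := hw.analyticOnNhd hU
  refine hwA.eqOn_zero_of_preconnected_of_eventuallyEq_zero hUc hz₀ ?_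
  exact (hwA z₀ hz₀).eventually_eq_zero_of_deriv_eventuallyEq_smul (ha z₀ hz₀) hw₀
    (eventuallyEq_of_mem (hU.mem_nhds hz₀) hderiv)

theorem IsOpen.exists_mul_affine_eq_of_hasDerivAt_sq_div_two (hU : IsOpen U)
    (hUc : IsPreconnected U) {q : ℂ → ℂ}
    (hq : ∀ z ∈ U, HasDerivAt q (q z ^ 2 / 2) z) {z₀ : ℂ} (hz₀ : z₀ ∈ U) :
    ∃ c d : ℂ, c * z₀ + d = 1 ∧ ∀ z ∈ U, q z * (c * z + d) = -2 * c := by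
  set c := -q z₀ / 2
  refine ⟨c, 1 - c * z₀, by ring, fun z hz => ?_⟩
  set w : ℂ → ℂ := fun z => q z * (c * z + (1 - c * z₀)) + 2 * c
  have hw : ∀ z ∈ U, HasDerivAt w (q z / 2 * w z) z := fun z hz => by
    have hline := (hasDerivAt_id' z).const_mul c |>.add_const (1 - c * z₀)
    refine (((hq z hz).fun_mul hline).add_const (2 * c)).congr_deriv ?_
    simp only [w]
    ring
  have hqd : DifferentiableOn ℂ q U := fun z hz =>
    (hq z hz).differentiableAt.differentiableWithinAt
  have hqA : AnalyticOnNhd ℂ (q / 2) U := (hqd.analyticOnNhd hU).div_const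
  have hw_zero := hU.eqOn_zero_of_deriv_eq_smul hUc
    (fun z hz => (hw z hz).differentiableAt.differentiableWithinAt) hqA
    (fun z hz => (hw z hz).deriv) hz₀ (by simp only [w, c]; ring)
  have hwz : w z = 0 := hw_zero hz
  linear_combination hwz

theorem IsOpen.mul_affine_sq_eq_of_deriv_mul_affine_eq (hU : IsOpen U)
    (hUc : IsPreconnected U) {p : ℂ → ℂ}
    (hp : DifferentiableOn ℂ p U) {c d : ℂ}
    (hderiv : ∀ z ∈ U, deriv p z * (c * z + d) = -2 * c * p z) {z₀ z : ℂ} (hz₀ : z₀ ∈ U)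
    (hz : z ∈ U) : p z * (c * z + d) ^ 2 = p z₀ * (c * z₀ + d) ^ 2 := by
  have hsq (z : ℂ) : HasDerivAt (fun z => (c * z + d) ^ 2) (2 * (c * z + d) * c) z :=
    (((hasDerivAt_id' z).const_mul c).add_const d |>.fun_pow 2).congr_deriv (by ring)
  refine hU.is_const_of_deriv_eq_zero hUc
    (hp.mul fun z _ => (hsq z).differentiableAt.differentiableWithinAt) (fun z hz => ?_) hz hz₀
  have hpz := (hp z hz).differentiableAt (hU.mem_nhds hz)
  rw [(hpz.hasDerivAt.mul (hsq z)).deriv, Pi.zero_apply]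
  linear_combination (c * z + d) * hderiv z hz

theorem IsOpen.exists_eqOn_moebius_of_deriv_mul_sq_eq (hU : IsOpen U)
    (hUc : IsPreconnected U) {f : ℂ → ℂ}
    (hf : DifferentiableOn ℂ f U) {c d k z₀ : ℂ} (hz₀ : z₀ ∈ U) (hcd : c * z₀ + d = 1) (hk : k ≠ 0)
    (hderiv : ∀ z ∈ U, deriv f z * (c * z + d) ^ 2 = k) :
    ∃ a b : ℂ, a * d - b * c = k ∧ EqOn f (fun z => (a * z + b) / (c * z + d)) U := by
  have hden : ∀ z ∈ U, c * z + d ≠ 0 := fun z hz h0 =>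
    hk <| by simpa [h0] using (hderiv z hz).symm
  -- `a, b` solve `a d - b c = k`, `a z₀ + b = f z₀`, a linear system of determinant
  -- `c z₀ + d = 1`
  set a := k + c * f z₀
  set b := f z₀ - a * z₀
  have hdet : a * d - b * c = k := by linear_combination (k + c * f z₀) * hcd
  refine ⟨a, b, hdet, hU.eqOn_of_deriv_eq hUc hf
    (fun z hz => (hasDerivAt_moebius (hden z hz)).differentiableAt.differentiableWithinAt)
    (fun z hz => ?_) hz₀ ?_⟩
  · rw [(hasDerivAt_moebius (hden z hz)).deriv, hdet, ← hderiv z hz,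
      mul_div_cancel_right₀ _ (pow_ne_zero 2 (hden z hz))]
  · simp only [hcd, div_one, b]
    ring

end OpenPreconnected

/-- A holomorphic function with nonvanishing derivative and vanishing Schwarzian on a
connected open set agrees with a Möbius transformation there. -/
theorem eq_moebius_of_schwarzian_eq_zero (U : Set ℂ) (f : ℂ → ℂ)
    (hU : IsOpen U) (hUc : IsConnected U)
    (hf : DifferentiableOn ℂ f U)
    (hf' : ∀ z ∈ U, deriv f z ≠ 0)
    (hS : ∀ z ∈ U, schwarzian f z = 0) :
    ∃ a b c d : ℂ, a * d - b * c ≠ 0 ∧ ∀ z ∈ U, f z = (a * z + b) / (c * z + d) := by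
  obtain ⟨z₀, hz₀⟩ := hUc.nonempty
  have hA₁ := (hf.analyticOnNhd hU).deriv
  have hA₂ : AnalyticOnNhd ℂ (iteratedDeriv 2 f) U := by
    rw [iteratedDeriv_succ, iteratedDeriv_one]; exact hA₁.deriv
  have hq (z : ℂ) (hz : z ∈ U) :
      HasDerivAt (preSchwarzian f) (preSchwarzian f z ^ 2 / 2) z := by
    simpa [hS z hz] using hasDerivAt_preSchwarzian (hA₁ z hz).differentiableAt
      (hA₂ z hz).differentiableAt (hf' z hz)
  obtain ⟨c, d, hcd, hcq⟩ :=
    hU.exists_mul_affine_eq_of_hasDerivAt_sq_div_two hUc.isPreconnected hq hz₀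
  have hf'' (z : ℂ) (hz : z ∈ U) : deriv (deriv f) z * (c * z + d) = -2 * c * deriv f z := by
    have := hcq z hz
    rw [preSchwarzian, iteratedDeriv_succ, iteratedDeriv_one] at this
    field_simp [hf' z hz] at this
    linear_combination this
  have hk (z : ℂ) (hz : z ∈ U) : deriv f z * (c * z + d) ^ 2 = deriv f z₀ := by
    simpa [hcd] using hU.mul_affine_sq_eq_of_deriv_mul_affine_eq hUc.isPreconnected
      hA₁.differentiableOn hf'' hz₀ hz
  obtain ⟨a, b, hdet, hfeq⟩ :=
    hU.exists_eqOn_moebius_of_deriv_mul_sq_eq hUc.isPreconnected hf hz₀ hcd (hf' z₀ hz₀) hk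
  exact ⟨a, b, c, d, hdet ▸ hf' z₀ hz₀, hfeq⟩
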